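/- Assume all agents have additive cost functions and let α ≥ 1, n ≥ 2. Every α-EF1 allocation is ((nα+n−1)/(n−1+α))-MMS. Moreover this bound is tight: for every n ≥ 2 and α ≥ 1 there exists an n-agent instance with additive cost functions, an α-EF1 allocation A, and an agent i with c_i(A_i) = ((nα+n−1)/(n−1+α))·MMS_i(n,E). -/

import Mathlib

open Finset

/-- `T` is a `k`-partition of the bundle `S`: pairwise disjoint bundles whose union is `S`. -/
def IsPartitionOf {E : Type*} [DecidableEq E] {k : ℕ} (T : Fin k → Finset E) (S : Finset E) :
    Prop :=
  (∀ i j : Fin k, i ≠ j → Disjoint (T i) (T j)) ∧ Finset.univ.biUnion T = S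

/-- The maximin share of cost function `c` on `S` among `k` agents:
the minimum over `k`-partitions of `S` of the maximum cost of a bundle. -/
noncomputable def MMS {E : Type*} [DecidableEq E] (c : Finset E → ℝ) (k : ℕ) (S : Finset E) :
    ℝ :=
  sInf { m : ℝ | ∃ T : Fin k → Finset E, IsPartitionOf T S ∧ m = ⨆ j : Fin k, c (T j) }

/-- `c` is a nonnegative additive cost function. -/
def AdditiveCost {E : Type*} [DecidableEq E] (c : Finset E → ℝ) : Prop :=
  (∀ S : Finset E, 0 ≤ c S) ∧ ∀ S : Finset E, c S = ∑ e ∈ S, c {e}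

/-- `c` is a nonnegative monotone cost function with `c ∅ = 0`. -/
def MonotoneCost {E : Type*} (c : Finset E → ℝ) : Prop :=
  (∀ S : Finset E, 0 ≤ c S) ∧ c ∅ = 0 ∧ ∀ ⦃S T : Finset E⦄, S ⊆ T → c S ≤ c T

/-- `c` is subadditive. -/
def SubadditiveCost {E : Type*} [DecidableEq E] (c : Finset E → ℝ) : Prop :=
  ∀ S T : Finset E, c (S ∪ T) ≤ c S + c T

/-- `c` is submodular. -/
def SubmodularCost {E : Type*} [DecidableEq E] (c : Finset E → ℝ) : Prop :=
  ∀ S T : Finset E, c (S ∪ T) + c (S ∩ T) ≤ c S + c T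

/-- `A` is an allocation of all chores among the `n` agents. -/
def IsAllocation {E : Type*} [DecidableEq E] [Fintype E] {n : ℕ} (A : Fin n → Finset E) : Prop :=
  IsPartitionOf A Finset.univ

/-- `A` is `α`-envy-free. -/
def IsEF {E : Type*} {n : ℕ} (α : ℝ) (c : Fin n → Finset E → ℝ) (A : Fin n → Finset E) : Prop :=
  ∀ i j, c i (A i) ≤ α * c i (A j)

/-- `A` is `α`-envy-free up to one item. -/
def IsEF1 {E : Type*} [DecidableEq E] {n : ℕ} (α : ℝ) (c : Fin n → Finset E → ℝ)
    (A : Fin n → Finset E) : Prop :=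
  ∀ i j, i ≠ j → A i = ∅ ∨ ∃ e ∈ A i, c i (A i \ {e}) ≤ α * c i (A j)

/-- `A` is `α`-envy-free up to any (positive-cost) item. -/
def IsEFX {E : Type*} [DecidableEq E] {n : ℕ} (α : ℝ) (c : Fin n → Finset E → ℝ)
    (A : Fin n → Finset E) : Prop :=
  ∀ i j, i ≠ j → ∀ e ∈ A i, 0 < c i {e} → c i (A i \ {e}) ≤ α * c i (A j)

/-- `A` is an `α`-MMS allocation. -/
def IsMMSFair {E : Type*} [DecidableEq E] [Fintype E] {n : ℕ} (α : ℝ)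
    (c : Fin n → Finset E → ℝ) (A : Fin n → Finset E) : Prop :=
  ∀ i, c i (A i) ≤ α * MMS (c i) n Finset.univ

/-- `A` is an `α`-PMMS allocation. -/
def IsPMMS {E : Type*} [DecidableEq E] {n : ℕ} (α : ℝ)
    (c : Fin n → Finset E → ℝ) (A : Fin n → Finset E) : Prop :=
  ∀ i j, i ≠ j → c i (A i) ≤ α * MMS (c i) 2 (A i ∪ A j)

/-- The optimal (minimum) social cost over all allocations. -/
noncomputable def OPT {E : Type*} [DecidableEq E] [Fintype E] {n : ℕ}
    (c : Fin n → Finset E → ℝ) : ℝ :=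
  sInf { s : ℝ | ∃ A : Fin n → Finset E, IsAllocation A ∧ s = ∑ i, c i (A i) }

/-!
Let `e` be agent `i`'s costliest chore in `A i`. Whichever chore α-EF1 lets `i` drop towards `j`,
dropping `e` instead also works, so `c(A i) - c{e} ≤ α c(A j)` for each of the `n - 1` agents
`j ≠ i`. Summing and using additivity, `(n - 1 + α) c(A i) ≤ α c(E) + (n - 1) c{e}`, while both
`c(E) / n` and `c{e}` are at most the maximin share.

For tightness take `n` pairs of chores, each pair costing `n - 1 + α`, so that the maximin share is
`n - 1 + α`: pair `0` is a big chore and a free one, every other pair a chore of cost `n - 1` and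
one of cost `α`. Agent `0` gets the big chore and all chores of cost `α`, every other agent one
chore of cost `n - 1`. Dropping the big chore leaves agent `0` with `(n - 1) α`, so the
allocation is α-EF1, and agent `0` pays `nα + n - 1`.
-/

section Partition

variable {E F : Type*} [DecidableEq E] [DecidableEq F] {k : ℕ}

lemma isPartitionOf_ite (j₀ : Fin k) (S : Finset E) :
    IsPartitionOf (fun j => if j = j₀ then S else ∅) S := by
  refine ⟨fun i j hij => ?_, ?_⟩
  · by_cases hi : i = j₀ <;> by_cases hj : j = j₀ <;> simp_all
  · ext e
    simp only [mem_biUnion, mem_univ, true_and]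
    exact ⟨fun ⟨j, hj⟩ => by split_ifs at hj <;> simp_all, fun he => ⟨j₀, by simpa⟩⟩

lemma IsPartitionOf.map {T : Fin k → Finset E} {S : Finset E} (hT : IsPartitionOf T S)
    (f : E ↪ F) : IsPartitionOf (fun j => (T j).map f) (S.map f) := by
  refine ⟨fun i j hij => (disjoint_map f).mpr (hT.1 i j hij), ?_⟩
  ext x
  simp only [← hT.2, mem_biUnion, mem_map, mem_univ, true_and]
  exact ⟨fun ⟨j, y, hy, hfy⟩ => ⟨y, ⟨j, hy⟩, hfy⟩,
    fun ⟨y, ⟨j, hy⟩, hfy⟩ => ⟨j, y, hy, hfy⟩⟩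

lemma isAllocation_fiber [Fintype E] {n : ℕ} (f : E → Fin n) :
    IsAllocation (fun i => univ.filter (f · = i)) := by
  refine ⟨fun i j hij => disjoint_filter.mpr fun e _ hi hj => hij (hi.symm.trans hj), ?_⟩
  ext e
  simp

end Partition

section MaximinShare

variable {E F : Type*} [DecidableEq E] [DecidableEq F] {c : Finset E → ℝ} {k : ℕ}
  {S : Finset E} {T : Fin k → Finset E}

lemma le_MMS (hk : 0 < k) {b : ℝ}
    (h : ∀ T : Fin k → Finset E, IsPartitionOf T S → b ≤ ⨆ j, c (T j)) : b ≤ MMS c k S :=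
  le_csInf ⟨_, _, isPartitionOf_ite ⟨0, hk⟩ S, rfl⟩ fun _ ⟨T, hT, hm⟩ => hm ▸ h T hT

lemma MMS_le (hc : ∀ S, 0 ≤ c S) (hT : IsPartitionOf T S) : MMS c k S ≤ ⨆ j, c (T j) :=
  csInf_le ⟨0, fun _ ⟨T', _, hm⟩ => hm ▸ Real.iSup_nonneg fun j => hc (T' j)⟩
    ⟨T, hT, rfl⟩

lemma MMS_map_equiv (e : E ≃ F) :
    MMS (fun S => c (S.map e.symm.toEmbedding)) k (S.map e.toEmbedding) = MMS c k S := by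
  unfold MMS
  congr 1
  ext m
  constructor
  · rintro ⟨T, hT, rfl⟩
    refine ⟨fun j => (T j).map e.symm.toEmbedding, ?_, rfl⟩
    simpa [map_map] using hT.map e.symm.toEmbedding
  · rintro ⟨T, hT, rfl⟩
    refine ⟨fun j => (T j).map e.toEmbedding, hT.map e.toEmbedding, ?_⟩
    simp [map_map]

end MaximinShare

namespace AdditiveCost

variable {E F : Type*} [DecidableEq E] [DecidableEq F] {c : Finset E → ℝ} {k : ℕ}
  {S : Finset E} {T : Fin k → Finset E}

lemma empty (hc : AdditiveCost c) : c ∅ = 0 := by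
  rw [hc.2, sum_empty]

lemma sum_partition (hc : AdditiveCost c) (hT : IsPartitionOf T S) : ∑ j, c (T j) = c S := by
  rw [hc.2 S, ← hT.2, sum_biUnion fun i _ j _ hij => hT.1 i j hij]
  exact sum_congr rfl fun j _ => hc.2 (T j)

lemma sum_erase_partition (hc : AdditiveCost c) (hT : IsPartitionOf T S) (j : Fin k) :
    ∑ l ∈ univ.erase j, c (T l) = c S - c (T j) := by
  rw [← hc.sum_partition hT, ← add_sum_erase univ _ (mem_univ j)]
  ring

lemma sdiff_singleton (hc : AdditiveCost c) {e : E} (he : e ∈ S) :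
    c (S \ {e}) = c S - c {e} := by
  rw [hc.2 (S \ {e}), hc.2 S, sum_sdiff_eq_sub (singleton_subset_iff.mpr he), sum_singleton]

lemma singleton_le (hc : AdditiveCost c) {e : E} (he : e ∈ S) : c {e} ≤ c S := by
  rw [hc.2 S]
  exact single_le_sum (f := fun x => c {x}) (fun x _ => hc.1 {x}) he

lemma div_le_MMS (hc : AdditiveCost c) (hk : 0 < k) (S : Finset E) : c S / k ≤ MMS c k S := by
  refine le_MMS hk fun T hT => ?_
  rw [div_le_iff₀ (by exact_mod_cast hk), ← hc.sum_partition hT]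
  simpa [mul_comm] using
    sum_le_card_nsmul univ _ _ fun j _ => le_ciSup (Set.finite_range fun j => c (T j)).bddAbove j

lemma singleton_le_MMS (hc : AdditiveCost c) (hk : 0 < k) {e : E} (he : e ∈ S) :
    c {e} ≤ MMS c k S := by
  refine le_MMS hk fun T hT => ?_
  obtain ⟨j, -, hj⟩ := mem_biUnion.mp (hT.2 ▸ he : e ∈ univ.biUnion T)
  exact (hc.singleton_le hj).trans (le_ciSup (Set.finite_range fun j => c (T j)).bddAbove j)

lemma MMS_eq_of_forall_eq (hc : AdditiveCost c) (hk : 0 < k) (hT : IsPartitionOf T S) {m : ℝ}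
    (hm : ∀ j, c (T j) = m) : MMS c k S = m := by
  have : Nonempty (Fin k) := ⟨⟨0, hk⟩⟩
  refine le_antisymm ((MMS_le hc.1 hT).trans (by simp [hm])) ?_
  have hS : c S = k * m := by simp [← hc.sum_partition hT, hm]
  simpa [hS, hk.ne'] using hc.div_le_MMS hk S

lemma comp_map (hc : AdditiveCost c) (e : F ≃ E) :
    AdditiveCost fun S => c (S.map e.toEmbedding) :=
  ⟨fun S => hc.1 _, fun S => by simp [hc.2 (S.map _)]⟩

end AdditiveCost

namespace IsEF1

variable {E : Type*} [DecidableEq E] {n : ℕ} {α : ℝ} {c : Fin n → Finset E → ℝ}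
  {A : Fin n → Finset E}

lemma map {F : Type*} [DecidableEq F] (h : IsEF1 α c A) (e : E ≃ F) :
    IsEF1 α (fun i S => c i (S.map e.symm.toEmbedding)) (fun i => (A i).map e.toEmbedding) := by
  intro i j hij
  rcases h i j hij with hi | ⟨x, hx, hle⟩
  · simp [hi]
  · refine .inr ⟨e x, mem_map_equiv.mpr (by simpa using hx), ?_⟩
    simpa [map_map, Finset.map_sdiff] using hle

lemma sub_le_of_forall_le (h : IsEF1 α c A) {i j : Fin n} (hji : j ≠ i)
    (hc : AdditiveCost (c i)) {e : E} (he : e ∈ A i) (hmax : ∀ x ∈ A i, c i {x} ≤ c i {e}) :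
    c i (A i) - c i {e} ≤ α * c i (A j) := by
  rcases h i j hji.symm with hi | ⟨x, hx, hle⟩
  · exact absurd (hi ▸ he) (notMem_empty e)
  · linarith [hc.sdiff_singleton hx, hmax x hx]

end IsEF1

section UpperBound

variable {E : Type*} [DecidableEq E] [Fintype E] {n : ℕ} {α : ℝ}
  {c : Fin n → Finset E → ℝ} {A : Fin n → Finset E}

lemma IsEF1.mul_cost_le (h : IsEF1 α c A) (hα : 0 ≤ α) (hA : IsAllocation A) (i : Fin n)
    (hc : AdditiveCost (c i)) :
    ((n : ℝ) - 1 + α) * c i (A i) ≤ α * c i univ + ((n : ℝ) - 1) * MMS (c i) n univ := by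
  have hn : 0 < n := i.pos
  have hn' : (0 : ℝ) ≤ n - 1 := by
    have : (1 : ℝ) ≤ n := by exact_mod_cast hn
    linarith
  rcases (A i).eq_empty_or_nonempty with hi | hne
  · have hMMS : 0 ≤ MMS (c i) n univ :=
      (div_nonneg (hc.1 _) n.cast_nonneg).trans (hc.div_le_MMS hn univ)
    rw [hi, hc.empty, mul_zero]
    exact add_nonneg (mul_nonneg hα (hc.1 _)) (mul_nonneg hn' hMMS)
  · obtain ⟨e, he, hmax⟩ := exists_max_image (A i) (fun x => c i {x}) hne
    have hsum : ((n : ℝ) - 1) * (c i (A i) - c i {e}) ≤ α * (c i univ - c i (A i)) :=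
      calc ((n : ℝ) - 1) * (c i (A i) - c i {e})
          = ∑ j ∈ univ.erase i, (c i (A i) - c i {e}) := by
            simp [card_erase_of_mem, Nat.cast_sub hn, mul_sub]
        _ ≤ ∑ j ∈ univ.erase i, α * c i (A j) :=
            sum_le_sum fun j hj => h.sub_le_of_forall_le (ne_of_mem_erase hj) hc he hmax
        _ = α * (c i univ - c i (A i)) := by rw [← mul_sum, hc.sum_erase_partition hA i]
    linarith [mul_le_mul_of_nonneg_left (hc.singleton_le_MMS hn (mem_univ e)) hn']

theorem IsEF1.isMMSFair (h : IsEF1 α c A) (hn : 2 ≤ n) (hα : 0 ≤ α)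
    (hc : ∀ i, AdditiveCost (c i)) (hA : IsAllocation A) :
    IsMMSFair (((n : ℝ) * α + n - 1) / (n - 1 + α)) c A := by
  intro i
  have hpos : 0 < (n : ℝ) - 1 + α := by
    have : (2 : ℝ) ≤ n := by exact_mod_cast hn
    linarith
  have hcE : c i univ ≤ n * MMS (c i) n univ := by
    have := (hc i).div_le_MMS i.pos univ
    rwa [div_le_iff₀ (by exact_mod_cast i.pos), mul_comm] at this
  rw [div_mul_eq_mul_div, le_div_iff₀ hpos]
  linarith [h.mul_cost_le hα hA i (hc i), mul_le_mul_of_nonneg_left hcE hα]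

end UpperBound

section TightExample

variable (n : ℕ) [NeZero n] (α : ℝ)

-- Pair `j` is `{(j, 0), (j, 1)}`; `(0, 0)` is the big chore and `(0, 1)` the free one.
noncomputable def tightWeight (x : Fin n × Fin 2) : ℝ :=
  if x.1 = 0 then ![(n : ℝ) - 1 + α, 0] x.2 else ![(n : ℝ) - 1, α] x.2

noncomputable def tightCost (S : Finset (Fin n × Fin 2)) : ℝ :=
  ∑ x ∈ S, tightWeight n α x

def tightAllocation (i : Fin n) : Finset (Fin n × Fin 2) :=
  univ.filter fun x => (if x.2 = 0 then x.1 else 0) = i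

variable {n α}

lemma tightCost_additive (hα : 0 ≤ α) : AdditiveCost (tightCost n α) := by
  have hw : ∀ x, 0 ≤ tightWeight n α x := by
    rintro ⟨j, l⟩
    have hn : (1 : ℝ) ≤ n := by exact_mod_cast NeZero.one_le
    fin_cases l <;> simp only [tightWeight] <;> split_ifs <;>
      simp only [Matrix.cons_val_zero, Matrix.cons_val_one, Fin.mk_one, Fin.zero_eta] <;> linarith
  exact ⟨fun S => sum_nonneg fun x _ => hw x, fun S => by simp [tightCost]⟩

lemma tightCost_filter_fst_eq (j : Fin n) :
    tightCost n α (univ.filter (·.1 = j)) = n - 1 + α := by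
  simp only [tightCost, sum_filter, Fintype.sum_prod_type, tightWeight, sum_ite_irrel,
    sum_const_zero, sum_ite_eq', mem_univ, if_true]
  split_ifs <;> simp [Fin.sum_univ_two]

lemma MMS_tightCost (hα : 0 ≤ α) : MMS (tightCost n α) n univ = n - 1 + α :=
  (tightCost_additive hα).MMS_eq_of_forall_eq (NeZero.pos n) (isAllocation_fiber Prod.fst)
    tightCost_filter_fst_eq

lemma isAllocation_tightAllocation : IsAllocation (tightAllocation n) :=
  isAllocation_fiber _

lemma tightAllocation_of_ne_zero {j : Fin n} (hj : j ≠ 0) : tightAllocation n j = {(j, 0)} := by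
  ext ⟨k, l⟩
  fin_cases l <;> simp [tightAllocation, hj.symm]

lemma tightCost_tightAllocation_of_ne_zero {j : Fin n} (hj : j ≠ 0) :
    tightCost n α (tightAllocation n j) = n - 1 := by
  simp [tightAllocation_of_ne_zero hj, tightCost, tightWeight, hj]

lemma tightAllocation_zero_sdiff :
    tightAllocation n 0 \ {(0, 0)} = univ.filter (·.2 = 1) := by
  ext ⟨k, l⟩
  fin_cases l <;> simp [tightAllocation]

lemma tightCost_tightAllocation_zero_sdiff :
    tightCost n α (tightAllocation n 0 \ {(0, 0)}) = (n - 1) * α := by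
  simp only [tightAllocation_zero_sdiff, tightCost, sum_filter, Fintype.sum_prod_type,
    tightWeight]
  simp [sum_ite, filter_ne', Nat.cast_sub NeZero.one_le, sub_mul]

lemma isEF1_tightAllocation (hα : 0 ≤ α) :
    IsEF1 α (fun _ => tightCost n α) (tightAllocation n) := by
  intro i j hij
  refine .inr ?_
  dsimp only
  by_cases hi : i = 0
  · subst hi
    refine ⟨(0, 0), by simp [tightAllocation], ?_⟩
    rw [tightCost_tightAllocation_zero_sdiff, tightCost_tightAllocation_of_ne_zero hij.symm,
      mul_comm]
  · rw [tightAllocation_of_ne_zero hi]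
    refine ⟨(i, 0), mem_singleton_self _, ?_⟩
    rw [sdiff_self, bot_eq_empty, (tightCost_additive hα).empty]
    exact mul_nonneg hα ((tightCost_additive hα).1 _)

lemma tightCost_tightAllocation_zero_eq_mul_MMS (hα : 0 < α) :
    tightCost n α (tightAllocation n 0) =
      ((n : ℝ) * α + n - 1) / (n - 1 + α) * MMS (tightCost n α) n univ := by
  have hc := tightCost_additive (n := n) hα.le
  have hsplit := hc.sdiff_singleton (S := tightAllocation n 0) (e := (0, 0))
    (by simp [tightAllocation])
  have hbig : tightCost n α {(0, 0)} = n - 1 + α := by simp [tightCost, tightWeight]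
  have hpos : (n : ℝ) - 1 + α ≠ 0 := by
    have : (1 : ℝ) ≤ n := by exact_mod_cast NeZero.one_le
    linarith
  rw [MMS_tightCost hα.le, div_mul_cancel₀ _ hpos]
  linarith [tightCost_tightAllocation_zero_sdiff (n := n) (α := α)]

end TightExample

theorem IsEF1.exists_fin_relabel {E : Type*} [DecidableEq E] [Fintype E] {n : ℕ} {α ρ : ℝ}
    {c : Fin n → Finset E → ℝ} {A : Fin n → Finset E} (h : IsEF1 α c A)
    (hc : ∀ i, AdditiveCost (c i)) (hA : IsAllocation A) {i : Fin n}
    (hi : c i (A i) = ρ * MMS (c i) n univ) :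
    ∃ (m : ℕ) (c' : Fin n → Finset (Fin m) → ℝ) (A' : Fin n → Finset (Fin m)),
      (∀ i, AdditiveCost (c' i)) ∧ IsAllocation A' ∧ IsEF1 α c' A' ∧
      ∃ i, c' i (A' i) = ρ * MMS (c' i) n univ := by
  let e := Fintype.equivFin E
  refine ⟨_, _, _, fun i => (hc i).comp_map e.symm, ?_, h.map e, i, ?_⟩
  · simpa only [IsAllocation, map_univ_equiv] using hA.map e.toEmbedding
  · rw [← map_univ_equiv e, MMS_map_equiv]
    simpa [map_map] using hi

/-- Proposition 4.6: with additive cost functions, every `α`-EF1 allocation is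
`(nα+n-1)/(n-1+α)`-MMS, and this bound is tight. -/
theorem alphaEF1_is_MMS_and_tight :
    (∀ (E : Type) [DecidableEq E] [Fintype E] (n : ℕ), 2 ≤ n → ∀ α : ℝ, 1 ≤ α →
      ∀ c : Fin n → Finset E → ℝ, (∀ i, AdditiveCost (c i)) →
      ∀ A : Fin n → Finset E, IsAllocation A → IsEF1 α c A →
        IsMMSFair (((n : ℝ) * α + (n : ℝ) - 1) / ((n : ℝ) - 1 + α)) c A) ∧
    (∀ n : ℕ, 2 ≤ n → ∀ α : ℝ, 1 ≤ α →
      ∃ (m : ℕ) (c : Fin n → Finset (Fin m) → ℝ) (A : Fin n → Finset (Fin m)),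
        (∀ i, AdditiveCost (c i)) ∧ IsAllocation A ∧ IsEF1 α c A ∧
        ∃ i, c i (A i) =
          (((n : ℝ) * α + (n : ℝ) - 1) / ((n : ℝ) - 1 + α)) * MMS (c i) n Finset.univ) := by
  refine ⟨fun E _ _ n hn α hα c hc A hA h => h.isMMSFair hn (by linarith) hc hA,
    fun n hn α hα => ?_⟩
  have : NeZero n := ⟨by omega⟩
  have hα₀ : 0 < α := by linarith
  exact (isEF1_tightAllocation hα₀.le).exists_fin_relabel (fun _ => tightCost_additive hα₀.le)
    isAllocation_tightAllocation (tightCost_tightAllocation_zero_eq_mul_MMS hα₀)
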